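/- arXiv:2306.14869 — 5 statements merged into one kernel-verified Lean document; each statement's English description precedes it below -/
import Mathlib

section
/- Let u, w : ℝ × ℤ → ℂ be differentiable in the real variable t, with w(t,n)² = 1 + u(t,n)², u(t,n) ≠ 0 and w(t,n) ≠ 0 for all (t,n), and suppose u solves the discrete Kaup–Kupershmidt equation ∂_t u(t,n) = w(t,n)² ( u(t,n+2) w(t,n+1) − u(t,n−2) w(t,n−1) ) (so that automatically ∂_t w = u ∂_t u / w). Then for every λ ∈ ℂ with λ ≠ 0 and all (t,n), the Lax matrices satisfy the zero-curvature (compatibility) equation ∂_t U(λ)(t,n) = V(λ)(t,n+1) · U(λ)(t,n) − U(λ)(t,n) · V(λ)(t,n). -/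
/-!
Along the flow, `∂ₜ w = u ∂ₜ u / w` follows from differentiating `w² = 1 + u²`. Only the first row
of `U(λ)` depends on `t`, so by the quotient rule `∂ₜ U(λ)` is an explicit rational expression in
`u`, `w` at the sites `n - 2, …, n + 3`; after inserting the equation of motion, each entry of the
zero-curvature equation becomes a rational identity which holds modulo the relations
`w_m² = 1 + u_m²`.
-/

/-- The Lax matrix `U(λ)` at site `n`, for fields `u w : ℝ × ℤ → ℂ`. -/
noncomputable def laxU (u w : ℝ × ℤ → ℂ) (lam : ℂ) (t : ℝ) (n : ℤ) :
    Matrix (Fin 3) (Fin 3) ℂ :=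
  !![u (t, n+1) / (u (t, n) * w (t, n+1)), lam / w (t, n+1),
      -lam * u (t, n+1) * w (t, n) / (u (t, n) * w (t, n+1));
    1, 0, 0;
    0, 1, 0]

/-- The Lax matrix `V(λ)` at site `n`, for fields `u w : ℝ × ℤ → ℂ`. -/
noncomputable def laxV (u w : ℝ × ℤ → ℂ) (lam : ℂ) (t : ℝ) (n : ℤ) :
    Matrix (Fin 3) (Fin 3) ℂ :=
  !![lam + u (t, n+2) * w (t, n+1) / u (t, n), -(u (t, n) * u (t, n+1)),
      -(w (t, n) + lam * u (t, n+2) * w (t, n) * w (t, n+1) / u (t, n));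
    u (t, n+1) * w (t, n)^2 / u (t, n) + u (t, n-1) * w (t, n) / (lam * u (t, n)),
      lam - 1/lam,
      -(u (t, n-1) * w (t, n)^2 / u (t, n) + lam * u (t, n+1) * w (t, n) / u (t, n));
    w (t, n) + u (t, n-2) * w (t, n) * w (t, n-1) / (lam * u (t, n)),
      u (t, n) * u (t, n-1),
      -(1/lam + u (t, n-2) * w (t, n-1) / u (t, n))]

theorem DifferentiableAt.hasDerivAt_of_sq_eq_const_add_sq {𝕜 𝕜' : Type*}
    [NontriviallyNormedField 𝕜] [NormedField 𝕜'] [CharZero 𝕜'] [NormedAlgebra 𝕜 𝕜']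
    {f g : 𝕜 → 𝕜'} {g' c : 𝕜'} {x : 𝕜}
    (hf : DifferentiableAt 𝕜 f x) (hg : HasDerivAt g g' x) (hfg : ∀ y, f y ^ 2 = c + g y ^ 2)
    (hfx : f x ≠ 0) : HasDerivAt f (g x * g' / f x) x := by
  have hsq : HasDerivAt (fun y => f y ^ 2) (2 * g x * g') x := by
    simpa [hfg] using (hg.fun_pow 2).const_add c
  have key : 2 * f x * deriv f x = 2 * g x * g' := by
    simpa using (hf.hasDerivAt.fun_pow 2).unique hsq
  have hderiv : deriv f x = g x * g' / f x := by
    rw [eq_div_iff hfx]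
    linear_combination key / 2
  exact hderiv ▸ hf.hasDerivAt

/-- The right-hand side of the discrete Kaup–Kupershmidt equation `∂ₜ u = dKKFlow u w`. -/
def dKKFlow (u w : ℝ × ℤ → ℂ) (t : ℝ) (n : ℤ) : ℂ :=
  w (t, n) ^ 2 * (u (t, n+2) * w (t, n+1) - u (t, n-2) * w (t, n-1))

/-- The time derivative of `laxU u w lam · n` at `t`, when `u' m` and `w' m` are the time
derivatives of `u (·, m)` and `w (·, m)` at `t`. -/
noncomputable def laxUDeriv (u w : ℝ × ℤ → ℂ) (u' w' : ℤ → ℂ) (lam : ℂ) (t : ℝ) (n : ℤ) :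
    Matrix (Fin 3) (Fin 3) ℂ :=
  let a := u (t, n+1) / (u (t, n) * w (t, n+1))
  let a' := (u' (n+1) * (u (t, n) * w (t, n+1))
    - u (t, n+1) * (u' n * w (t, n+1) + u (t, n) * w' (n+1))) / (u (t, n) * w (t, n+1)) ^ 2
  !![a', -(lam * w' (n+1)) / w (t, n+1) ^ 2, -lam * (a' * w (t, n) + a * w' n); 0, 0, 0; 0, 0, 0]

theorem hasDerivAt_laxU_apply {u w : ℝ × ℤ → ℂ} {u' w' : ℤ → ℂ} {t : ℝ} {n : ℤ}
    (hu : ∀ m, HasDerivAt (fun s => u (s, m)) (u' m) t)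
    (hw : ∀ m, HasDerivAt (fun s => w (s, m)) (w' m) t)
    (hu0 : u (t, n) ≠ 0) (hw1 : w (t, n+1) ≠ 0) (lam : ℂ) (i j : Fin 3) :
    HasDerivAt (fun s => laxU u w lam s n i j) (laxUDeriv u w u' w' lam t n i j) t := by
  have ha := (hu (n+1)).fun_div ((hu n).fun_mul (hw (n+1))) (mul_ne_zero hu0 hw1)
  fin_cases i <;> fin_cases j <;>
    simp only [laxU, laxUDeriv, Fin.zero_eta, Fin.mk_one, Fin.reduceFinMk, Matrix.of_apply,
      Matrix.cons_val_zero, Matrix.cons_val_one, Matrix.cons_val_two, Matrix.head_cons,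
      Matrix.tail_cons]
  · exact ha
  · exact ((hasDerivAt_const t lam).fun_div (hw (n+1)) hw1).congr_deriv (by ring)
  · have hf : (fun s => -lam * u (s, n+1) * w (s, n) / (u (s, n) * w (s, n+1)))
        = fun s => -lam * (u (s, n+1) / (u (s, n) * w (s, n+1)) * w (s, n)) := by
      funext s; ring
    rw [hf]
    exact (ha.fun_mul (hw n)).const_mul (-lam)
  all_goals exact hasDerivAt_const t _

theorem laxUDeriv_dKKFlow {u w : ℝ × ℤ → ℂ} {t : ℝ} (n : ℤ) {lam : ℂ}
    (hw2 : ∀ m, w (t, m) ^ 2 = 1 + u (t, m) ^ 2) (hu0 : ∀ m, u (t, m) ≠ 0)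
    (hw0 : ∀ m, w (t, m) ≠ 0) (hlam : lam ≠ 0) :
    laxUDeriv u w (dKKFlow u w t) (fun m => u (t, m) * dKKFlow u w t m / w (t, m)) lam t n
      = laxV u w lam t (n+1) * laxU u w lam t n - laxU u w lam t n * laxV u w lam t n := by
  have hu₀ := hu0 n; have hu₁ := hu0 (n+1); have hw₀ := hw0 n; have hw₁ := hw0 (n+1)
  have hw2₀ := hw2 n; have hw2₁ := hw2 (n+1)
  ext i j
  fin_cases i <;> fin_cases j <;>
    simp only [laxUDeriv, laxU, laxV, dKKFlow, Matrix.sub_apply, Matrix.mul_apply,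
      Fin.sum_univ_three, Matrix.of_apply, Matrix.cons_val_zero, Matrix.cons_val_one,
      Matrix.cons_val_two, Matrix.head_cons, Matrix.tail_cons, Fin.zero_eta, Fin.mk_one,
      Fin.reduceFinMk, show n + 1 + 1 = n + 2 by ring, show n + 1 + 2 = n + 3 by ring,
      show n + 1 - 1 = n by ring, show n + 1 - 2 = n - 1 by ring] <;>
    field_simp <;> grind

/-- Zero-curvature (compatibility) equation for the discrete Kaup–Kupershmidt equation:
if `u` solves `∂ₜ u = w² (u₂ w₁ − u₋₂ w₋₁)` with `w² = 1 + u²`, then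
`∂ₜ U(λ) = V(λ)|_{n+1} · U(λ)|_n − U(λ)|_n · V(λ)|_n`. -/
theorem zero_curvature_dKK (u w : ℝ × ℤ → ℂ)
    (hud : ∀ n : ℤ, Differentiable ℝ (fun t : ℝ => u (t, n)))
    (hwd : ∀ n : ℤ, Differentiable ℝ (fun t : ℝ => w (t, n)))
    (hw2 : ∀ (t : ℝ) (n : ℤ), (w (t, n))^2 = 1 + (u (t, n))^2)
    (hu0 : ∀ (t : ℝ) (n : ℤ), u (t, n) ≠ 0)
    (hw0 : ∀ (t : ℝ) (n : ℤ), w (t, n) ≠ 0)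
    (heq : ∀ (t : ℝ) (n : ℤ), deriv (fun s : ℝ => u (s, n)) t
      = (w (t, n))^2 * (u (t, n+2) * w (t, n+1) - u (t, n-2) * w (t, n-1)))
    (lam : ℂ) (hlam : lam ≠ 0) (t : ℝ) (n : ℤ) :
    ∀ i j : Fin 3, deriv (fun s : ℝ => laxU u w lam s n i j) t
      = (laxV u w lam t (n+1) * laxU u w lam t n
          - laxU u w lam t n * laxV u w lam t n) i j := by
  intro i j
  have hu' (m : ℤ) : HasDerivAt (fun s => u (s, m)) (dKKFlow u w t m) t := by
    have h := (hud m t).hasDerivAt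
    rwa [heq t m] at h
  have hw' (m : ℤ) : HasDerivAt (fun s => w (s, m)) (u (t, m) * dKKFlow u w t m / w (t, m)) t :=
    (hwd m).differentiableAt.hasDerivAt_of_sq_eq_const_add_sq (hu' m) (fun s => hw2 s m) (hw0 t m)
  rw [(hasDerivAt_laxU_apply hu' hw' (hu0 t n) (hw0 t (n+1)) lam i j).deriv,
    laxUDeriv_dKKFlow n (hw2 t) (hu0 t) (hw0 t) hlam]
end

section
/- For u : ℤ → ℂ with u(n) ≠ 0 for all n, define the difference operator P on sequences a : ℤ → ℂ by P(a)(n) := (1 + u(n)²) ( u(n+2) a(n+1) − u(n−2) a(n−1) ), and its Fréchet derivative along a direction g : ℤ → ℂ by P_*[g](a)(n) := 2 u(n) g(n) ( u(n+2) a(n+1) − u(n−2) a(n−1) ) + (1 + u(n)²) ( g(n+2) a(n+1) − g(n−2) a(n−1) ). Define the bi-difference form ω(a,b)(n) := [ u₋₃ u₁ (1+u₋₁²) ( a b₋₂ − a₋₂ b ) + u₋₁ u₃ (1+u₁²) ( a₂ b − a b₂ ) ] / ( u₋₁ u₁ ), where a_k := a(n+k). Then P is pre-Hamiltonian with associated form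 ω; i.e. for all a, b : ℤ → ℂ and all n: P_*[P(a)](b)(n) − P_*[P(b)](a)(n) = P( ω(a,b) )(n). -/
/-- The difference operator `P = (w²/u)(S²−1)S⁻¹ u₁ u₋₁` (with `w² = 1+u²`), written so
that only `1+u²` appears: `P(a)(n) = (1+u(n)²)(u(n+2)a(n+1) − u(n−2)a(n−1))`. -/
def opP (u : ℤ → ℂ) (a : ℤ → ℂ) (n : ℤ) : ℂ :=
  (1 + (u n)^2) * (u (n+2) * a (n+1) - u (n-2) * a (n-1))

/-- The Fréchet derivative of the coefficients of `P` along the direction `g`. -/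
def opPfrechet (u : ℤ → ℂ) (g : ℤ → ℂ) (a : ℤ → ℂ) (n : ℤ) : ℂ :=
  2 * u n * g n * (u (n+2) * a (n+1) - u (n-2) * a (n-1))
    + (1 + (u n)^2) * (g (n+2) * a (n+1) - g (n-2) * a (n-1))

/-- The bi-difference form `ω` associated to the pre-Hamiltonian operator `P`. -/
noncomputable def omegaP (u : ℤ → ℂ) (a b : ℤ → ℂ) (n : ℤ) : ℂ :=
  (u (n-3) * u (n+1) * (1 + (u (n-1))^2) * (a n * b (n-2) - a (n-2) * b n)
    + u (n-1) * u (n+3) * (1 + (u (n+1))^2) * (a (n+2) * b n - a n * b (n+2)))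
    / (u (n-1) * u (n+1))

/-- `P` is a pre-Hamiltonian difference operator:
`P_*[P a](b) − P_*[P b](a) = P(ω(a,b))` for all sequences `a, b`. -/
theorem opP_preHamiltonian (u : ℤ → ℂ) (hu0 : ∀ n : ℤ, u n ≠ 0)
    (a b : ℤ → ℂ) (n : ℤ) :
    opPfrechet u (opP u a) b n - opPfrechet u (opP u b) a n
      = opP u (omegaP u a b) n := by
  simp only [opP, opPfrechet, omegaP,
    show n+1+2 = n+3 by ring, show n+1-2 = n-1 by ring,
    show n+1+1 = n+2 by ring, show n+1-1 = n by ring,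
    show n-1+2 = n+1 by ring, show n-1-2 = n-3 by ring,
    show n-1+1 = n by ring, show n-1-1 = n-2 by ring,
    show n+1-3 = n-2 by ring, show n+1+3 = n+4 by ring,
    show n-1-3 = n-4 by ring, show n-1+3 = n+2 by ring]
  field_simp [hu0]
  ring_nf
end

section
/- For u : ℤ → ℝ set w(n) := √(1 + u(n)²) > 0 and write a_k := a(n+k). Let δ(n) := u₂ w₁ + u₋₂ w₋₁ + u u₁ u₋₁ / w, which equals the difference variational derivative δ_u ( u₁ u₋₁ w ). Then there exists c : ℤ → ℝ such that, for all n: w(n+1) c(n+1) − w(n) c(n−1) = u(n) (w² δ)(n+1) − u(n+1) (w² δ)(n), and w(n)² ( w(n+1)(w² δ)(n+2) − w(n−1)(w² δ)(n−2) + u(n+1) c(n) − u(n−1) c(n−1) ) = g(n), where g(n) = w² ( u₄w₁w₂²w₃ + u₁u₂u₃w₁w₂ + u u₂² w₁² + u₋₁u₁u₂ w w₁ − u₋₂u₋₁u₁ w₋₁ w − u₋₂² u w₋₁² − u₋₃u₋₂u₋₁ w₋₂ w₋₁ − u₋₄ w₋₃ w₋₂² w₋₁ ). Consequently the second flow of the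 discrete Kaup–Kupershmidt hierarchy is Hamiltonian: u_{t₂} = H δ_u ( u₁ u₋₁ w ). -/
/-- The second flow of the discrete Kaup–Kupershmidt hierarchy is Hamiltonian:
`u_{t₂} = H δ_u (u₁ u₋₁ w)`, where `δ = u₂w₁ + u₋₂w₋₁ + u u₁ u₋₁/w` is the variational
derivative of the density `u₁ u₋₁ w`, and
`H = w²(SwS − S⁻¹wS⁻¹)w² + w²(u₁ − S⁻¹u)(Sw − wS⁻¹)⁻¹(uS − u₁)w²`: there is a sequence `c`
solving the nonlocal part, `(Sw − wS⁻¹)c = (uS − u₁)(w²δ)`, such that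
`w²( (SwS − S⁻¹wS⁻¹)(w²δ) + (u₁ − S⁻¹u)c ) = g`, the second flow. -/
theorem second_flow_is_Hamiltonian (u : ℤ → ℝ) :
    let W : ℤ → ℝ := fun n => Real.sqrt (1 + u n ^ 2)
    let δ : ℤ → ℝ := fun n =>
      u (n+2) * W (n+1) + u (n-2) * W (n-1) + u n * u (n+1) * u (n-1) / W n
    let g : ℤ → ℝ := fun n => (W n)^2 *
      (u (n+4) * W (n+1) * (W (n+2))^2 * W (n+3)
        + u (n+1) * u (n+2) * u (n+3) * W (n+1) * W (n+2)
        + u n * (u (n+2))^2 * (W (n+1))^2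
        + u (n-1) * u (n+1) * u (n+2) * W n * W (n+1)
        - u (n-2) * u (n-1) * u (n+1) * W (n-1) * W n
        - (u (n-2))^2 * u n * (W (n-1))^2
        - u (n-3) * u (n-2) * u (n-1) * W (n-2) * W (n-1)
        - u (n-4) * W (n-3) * (W (n-2))^2 * W (n-1))
    ∃ c : ℤ → ℝ,
      (∀ n : ℤ, W (n+1) * c (n+1) - W n * c (n-1)
          = u n * ((W (n+1))^2 * δ (n+1)) - u (n+1) * ((W n)^2 * δ n))
        ∧ ∀ n : ℤ, (W n)^2 *
              (W (n+1) * ((W (n+2))^2 * δ (n+2)) - W (n-1) * ((W (n-2))^2 * δ (n-2))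
                + u (n+1) * c n - u (n-1) * c (n-1))
            = g n := by
  intro W δ g
  have hpos : ∀ k : ℤ, 0 < W k := fun k => Real.sqrt_pos.mpr (by positivity)
  have hW : ∀ k : ℤ, (W k) ^ 2 = 1 + (u k) ^ 2 := fun k => Real.sq_sqrt (by positivity)
  have hδ : ∀ k : ℤ, (W k) ^ 2 * δ k
      = u (k+2) * W (k+1) * (W k) ^ 2 + u (k-2) * W (k-1) * (W k) ^ 2
        + u k * u (k+1) * u (k-1) * W k := by
    intro k
    have h0 : W k ≠ 0 := (hpos k).ne'
    show (W k) ^ 2 * (u (k+2) * W (k+1) + u (k-2) * W (k-1)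
        + u k * u (k+1) * u (k-1) / W k) = _
    field_simp
  refine ⟨fun m => u (m-1) * u (m+2) * W m * W (m+1) - u m * u (m+1),
    fun n => ?_, fun n => ?_⟩
  · rw [hδ (n+1), hδ n]
    simp only [show (n:ℤ)+1+2 = n+3 from by ring, show (n:ℤ)+1+1 = n+2 from by ring,
      show (n:ℤ)+1-2 = n-1 from by ring, show (n:ℤ)+1-1 = n from by ring,
      show (n:ℤ)-1-1 = n-2 from by ring, show (n:ℤ)-1+2 = n+1 from by ring,
      show (n:ℤ)-1+1 = n from by ring]
    linear_combination (u (n+1) * u (n+2) * W (n+1)) * hW n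
      - (u (n-1) * u n * W n) * hW (n+1)
  · rw [hδ (n+2), hδ (n-2)]
    simp only [show (n:ℤ)+2+2 = n+4 from by ring, show (n:ℤ)+2+1 = n+3 from by ring,
      show (n:ℤ)+2-2 = n from by ring, show (n:ℤ)+2-1 = n+1 from by ring,
      show (n:ℤ)-2+2 = n from by ring, show (n:ℤ)-2+1 = n-1 from by ring,
      show (n:ℤ)-2-2 = n-4 from by ring, show (n:ℤ)-2-1 = n-3 from by ring,
      show (n:ℤ)-1-1 = n-2 from by ring, show (n:ℤ)-1+2 = n+1 from by ring,
      show (n:ℤ)-1+1 = n from by ring]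
    linear_combination
      (- u n * (W (n-1)) ^ 2 * (W n) ^ 2) * hW (n-2)
      + (- u n * (W n) ^ 2) * hW (n-1)
      + (u n * (W (n+1)) ^ 2 * (W (n+2)) ^ 2 - u n * (u (n+1)) ^ 2
          - u n * (u (n+2)) ^ 2 * (W (n+1)) ^ 2 - u n) * hW n
      + (u n * (W (n+2)) ^ 2 + (u n) ^ 3 * (W (n+2)) ^ 2 - u n * (u (n+2)) ^ 2
          - (u n) ^ 3 * (u (n+2)) ^ 2) * hW (n+1)
      + (u n + u n * (u (n+1)) ^ 2 + (u n) ^ 3 + (u n) ^ 3 * (u (n+1)) ^ 2) * hW (n+2)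
end

section
/- Fix p ∈ ℕ, p ≥ 1, and let u : ℤ → ℝ satisfy u(n+k) > 0 and u(n−k) > 0 for k = 1, …, p−1 at a given site n. Then lim_{ε → 0⁺} ε^{p+2} (1 + ε^{-2} u(n)²) [ ε^{-1} u(n+p) Π_{k=1}^{p−1} √(1 + ε^{-2} u(n+k)²) − ε^{-1} u(n−p) Π_{k=1}^{p−1} √(1 + ε^{-2} u(n−k)²) ] = u(n)² ( Π_{k=1}^{p} u(n+k) − Π_{k=1}^{p} u(n−k) ). That is, under the rescaling u_k → ε^{-1} u_k, t → ε^{p+1} t, the equation u_t = (1+u²)( u_p Π_{k=1}^{p−1} √(1+u_k²) − u_{−p} Π_{k=1}^{p−1} √(1+u_{−k}²) ) degenerates as ε → 0 into the modified Narita–Itoh–Bogoyavlensky equation u_t = u² ( Π_{k=1}^{p} u_k − Π_{k=1}^{p} u_{−k} ). -/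
open Filter Topology Finset

/-!
For `ε > 0` each factor `√(1 + ε⁻² x²)` equals `ε⁻¹ √(ε² + x²)`, and the powers of `ε` cancel
exactly: the rescaled right-hand side is `(ε² + u²)(u_p ∏ √(ε² + u_k²) − u_{−p} ∏ √(ε² + u_{−k}²))`,
a continuous function of `ε`. Its value at `ε = 0` is the modified Narita–Itoh–Bogoyavlensky
right-hand side, because `√(u_k²) = u_k` for the positive `u_{±k}`, `1 ≤ k ≤ p − 1`.
-/

namespace Real

lemma sqrt_one_add_inv_sq_mul_sq {ε : ℝ} (hε : 0 < ε) (x : ℝ) :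
    √(1 + ε⁻¹ ^ 2 * x ^ 2) = ε⁻¹ * √(ε ^ 2 + x ^ 2) := by
  rw [show 1 + ε⁻¹ ^ 2 * x ^ 2 = ε⁻¹ ^ 2 * (ε ^ 2 + x ^ 2) by field_simp,
    sqrt_mul (by positivity), sqrt_sq (by positivity)]

lemma prod_sqrt_one_add_inv_sq_mul_sq {ι : Type*} (s : Finset ι) (x : ι → ℝ) {ε : ℝ}
    (hε : 0 < ε) :
    ∏ k ∈ s, √(1 + ε⁻¹ ^ 2 * x k ^ 2) = ε⁻¹ ^ #s * ∏ k ∈ s, √(ε ^ 2 + x k ^ 2) := by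
  simp only [sqrt_one_add_inv_sq_mul_sq hε, prod_mul_distrib, prod_const]

lemma prod_sqrt_zero_sq_add_sq {ι : Type*} {s : Finset ι} {x : ι → ℝ}
    (hx : ∀ k ∈ s, 0 ≤ x k) :
    ∏ k ∈ s, √((0 : ℝ) ^ 2 + x k ^ 2) = ∏ k ∈ s, x k :=
  prod_congr rfl fun k hk => by rw [zero_pow two_ne_zero, zero_add, sqrt_sq (hx k hk)]

end Real

open Real

lemma pow_add_three_mul_rescaled_eq {ε : ℝ} (hε : 0 < ε) (m : ℕ) (a b c P Q : ℝ) :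
    ε ^ (m + 3) * (1 + ε⁻¹ ^ 2 * c ^ 2) * (ε⁻¹ * a * (ε⁻¹ ^ m * P) - ε⁻¹ * b * (ε⁻¹ ^ m * Q))
      = (ε ^ 2 + c ^ 2) * (a * P - b * Q) := by
  simp only [inv_pow]
  field_simp
  ring

theorem tendsto_rescaled_deformation {ι : Type*} (s : Finset ι) (a b c : ℝ) {x y : ι → ℝ}
    (hx : ∀ k ∈ s, 0 ≤ x k) (hy : ∀ k ∈ s, 0 ≤ y k) :
    Tendsto (fun ε : ℝ => ε ^ (#s + 3) * (1 + ε⁻¹ ^ 2 * c ^ 2) *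
        (ε⁻¹ * a * ∏ k ∈ s, √(1 + ε⁻¹ ^ 2 * x k ^ 2)
          - ε⁻¹ * b * ∏ k ∈ s, √(1 + ε⁻¹ ^ 2 * y k ^ 2)))
      (𝓝[>] 0) (𝓝 (c ^ 2 * (a * ∏ k ∈ s, x k - b * ∏ k ∈ s, y k))) := by
  set G : ℝ → ℝ := fun ε => (ε ^ 2 + c ^ 2) *
    (a * ∏ k ∈ s, √(ε ^ 2 + x k ^ 2) - b * ∏ k ∈ s, √(ε ^ 2 + y k ^ 2))
  have hG0 : G 0 = c ^ 2 * (a * ∏ k ∈ s, x k - b * ∏ k ∈ s, y k) := by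
    simp only [G, prod_sqrt_zero_sq_add_sq hx, prod_sqrt_zero_sq_add_sq hy]
    ring
  have hG : Tendsto G (𝓝[>] 0) (𝓝 (G 0)) :=
    ((by fun_prop : Continuous G).tendsto 0).mono_left nhdsWithin_le_nhds
  rw [← hG0]
  refine hG.congr' ?_
  filter_upwards [self_mem_nhdsWithin] with ε (hε : 0 < ε)
  rw [prod_sqrt_one_add_inv_sq_mul_sq s x hε, prod_sqrt_one_add_inv_sq_mul_sq s y hε,
    pow_add_three_mul_rescaled_eq hε]

/-- Under the rescaling `u_k → ε⁻¹ u_k`, `t → ε^{p+1} t`, the integrable deformation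
`u_t = (1+u²)( u_p Π_{k=1}^{p−1} √(1+u_k²) − u_{−p} Π_{k=1}^{p−1} √(1+u_{−k}²) )`
degenerates as `ε → 0⁺` into the modified Narita–Itoh–Bogoyavlensky equation
`u_t = u²( Π_{k=1}^{p} u_k − Π_{k=1}^{p} u_{−k} )`. -/
theorem rescaling_limit_to_mNIB (p : ℕ) (hp : 1 ≤ p) (u : ℤ → ℝ) (n : ℤ)
    (hpos : ∀ k : ℕ, 1 ≤ k → k ≤ p - 1 → 0 < u (n + k) ∧ 0 < u (n - k)) :
    Tendsto (fun ε : ℝ =>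
        ε^(p+2) * (1 + ε⁻¹^2 * (u n)^2) *
          (ε⁻¹ * u (n + p) *
              ∏ k ∈ Finset.Icc 1 (p-1), Real.sqrt (1 + ε⁻¹^2 * (u (n + k))^2)
            - ε⁻¹ * u (n - p) *
                ∏ k ∈ Finset.Icc 1 (p-1), Real.sqrt (1 + ε⁻¹^2 * (u (n - k))^2)))
      (nhdsWithin 0 (Set.Ioi 0))
      (nhds ((u n)^2 *
        (∏ k ∈ Finset.Icc 1 p, u (n + k) - ∏ k ∈ Finset.Icc 1 p, u (n - k)))) := by
  obtain ⟨q, rfl⟩ : ∃ q, p = q + 1 := ⟨p - 1, (Nat.sub_add_cancel hp).symm⟩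
  have hpos_Icc : ∀ k ∈ Icc 1 q, 0 < u (n + k) ∧ 0 < u (n - k) := fun k hk =>
    hpos k (mem_Icc.1 hk).1 (by simpa using (mem_Icc.1 hk).2)
  have hlim := tendsto_rescaled_deformation (Icc 1 q) (u (n + (q + 1 : ℕ)))
    (u (n - (q + 1 : ℕ))) (u n) (fun k hk => (hpos_Icc k hk).1.le)
    (fun k hk => (hpos_Icc k hk).2.le)
  rw [Nat.card_Icc, Nat.add_sub_cancel] at hlim
  rw [Nat.add_sub_cancel, show q + 1 + 2 = q + 3 from rfl,
    prod_Icc_succ_top (Nat.le_add_left 1 q), prod_Icc_succ_top (Nat.le_add_left 1 q)]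
  convert hlim using 3
  ring
end

section
/- Fix p ∈ ℕ, p ≥ 1. Let v : ℝ × ℤ → ℂ be differentiable in t, with 1 − v(t,n)² ≠ 0 and 1 + v(t,n)² ≠ 0 for all (t,n). Define u := 2v/(1 − v²) and w := (1 + v²)/(1 − v²) (so w² = 1 + u² automatically). Then v satisfies the rational equation v_t = (1+v²) ( Π_{k=1}^{p−1} ((1+v_k²)/(1−v_k²)) · v_p/(1−v_p²) − Π_{k=1}^{p−1} ((1+v_{−k}²)/(1−v_{−k}²)) · v_{−p}/(1−v_{−p}²) ) if and only if u satisfies u_t = (1+u²) ( u_p Π_{k=1}^{p−1} w_k − u_{−p} Π_{k=1}^{p−1} w_{−k} ), where a_k := a(t, n+k). -/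
/-!
With `u = 2v/(1-v²)` and `w = (1+v²)/(1-v²)` one has `1 + u² = w²` and
`u_t = 2(1+v²)/(1-v²)² · v_t`. Substituting both into the `u`-equation turns it into the
`v`-equation multiplied by the same factor `2(1+v²)/(1-v²)²`, which is nonzero exactly when
`1 + v² ≠ 0`.
-/

section Algebra

variable {K : Type*} [Field K]

theorem one_add_sq_two_mul_div_one_sub_sq {a : K} (ha : 1 - a ^ 2 ≠ 0) :
    1 + (2 * a / (1 - a ^ 2)) ^ 2 = ((1 + a ^ 2) / (1 - a ^ 2)) ^ 2 := by
  field_simp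
  ring

theorem rational_form_rhs_eq {a b c P Q : K} (ha : 1 - a ^ 2 ≠ 0) (hb : 1 - b ^ 2 ≠ 0)
    (hc : 1 - c ^ 2 ≠ 0) :
    (1 + (2 * a / (1 - a ^ 2)) ^ 2) *
        (2 * b / (1 - b ^ 2) * P - 2 * c / (1 - c ^ 2) * Q)
      = 2 * (1 + a ^ 2) / (1 - a ^ 2) ^ 2 *
        ((1 + a ^ 2) * (P * (b / (1 - b ^ 2)) - Q * (c / (1 - c ^ 2)))) := by
  rw [one_add_sq_two_mul_div_one_sub_sq ha]
  field_simp

end Algebra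

section Calculus

variable {𝕜 𝕜' : Type*} [NontriviallyNormedField 𝕜] [NontriviallyNormedField 𝕜']
  [NormedAlgebra 𝕜 𝕜'] {f : 𝕜 → 𝕜'} {f' : 𝕜'} {x : 𝕜}

theorem HasDerivAt.two_mul_div_one_sub_sq (hf : HasDerivAt f f' x) (hx : 1 - f x ^ 2 ≠ 0) :
    HasDerivAt (fun y => 2 * f y / (1 - f y ^ 2))
      (2 * (1 + f x ^ 2) / (1 - f x ^ 2) ^ 2 * f') x := by
  convert (hf.const_mul 2).fun_div ((hf.fun_pow 2).const_sub 1) hx using 1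
  field_simp
  ring

end Calculus

theorem rational_form_equivalence_general (p : ℕ) (v : ℝ × ℤ → ℂ)
    (hv : ∀ n : ℤ, Differentiable ℝ (fun t : ℝ => v (t, n)))
    (hv1 : ∀ (t : ℝ) (n : ℤ), 1 - v (t, n)^2 ≠ 0)
    (hv2 : ∀ (t : ℝ) (n : ℤ), 1 + v (t, n)^2 ≠ 0) :
    let u : ℝ × ℤ → ℂ := fun q => 2 * v q / (1 - v q ^ 2)
    let w : ℝ × ℤ → ℂ := fun q => (1 + v q ^ 2) / (1 - v q ^ 2)
    (∀ (t : ℝ) (n : ℤ), deriv (fun s : ℝ => v (s, n)) t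
        = (1 + v (t, n)^2) *
            ((∏ k ∈ Finset.Icc 1 (p-1),
                ((1 + v (t, n + (k:ℤ))^2) / (1 - v (t, n + (k:ℤ))^2)))
                * (v (t, n + (p:ℤ)) / (1 - v (t, n + (p:ℤ))^2))
              - (∏ k ∈ Finset.Icc 1 (p-1),
                  ((1 + v (t, n - (k:ℤ))^2) / (1 - v (t, n - (k:ℤ))^2)))
                  * (v (t, n - (p:ℤ)) / (1 - v (t, n - (p:ℤ))^2))))
      ↔ (∀ (t : ℝ) (n : ℤ), deriv (fun s : ℝ => u (s, n)) t
          = (1 + u (t, n)^2) *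
              (u (t, n + (p:ℤ)) * ∏ k ∈ Finset.Icc 1 (p-1), w (t, n + (k:ℤ))
                - u (t, n - (p:ℤ)) * ∏ k ∈ Finset.Icc 1 (p-1), w (t, n - (k:ℤ)))) := by
  intro u w
  refine forall₂_congr fun t n => ?_
  have hu_deriv : deriv (fun s : ℝ => u (s, n)) t
      = 2 * (1 + v (t, n) ^ 2) / (1 - v (t, n) ^ 2) ^ 2 * deriv (fun s : ℝ => v (s, n)) t :=
    ((hv n t).hasDerivAt.two_mul_div_one_sub_sq (hv1 t n)).deriv
  have hfactor : 2 * (1 + v (t, n) ^ 2) / (1 - v (t, n) ^ 2) ^ 2 ≠ 0 :=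
    div_ne_zero (mul_ne_zero two_ne_zero (hv2 t n)) (pow_ne_zero 2 (hv1 t n))
  rw [hu_deriv, rational_form_rhs_eq (hv1 t n) (hv1 t _) (hv1 t _), mul_right_inj' hfactor]

/-- The point transformation `u = 2v/(1−v²)`, `w = (1+v²)/(1−v²)` (so `w² = 1+u²`)
maps the rational form of the integrable family to the form
`u_t = (1+u²)( u_p Π_{k=1}^{p−1} w_k − u_{−p} Π_{k=1}^{p−1} w_{−k} )`. -/
theorem rational_form_equivalence (p : ℕ) (hp : 1 ≤ p) (v : ℝ × ℤ → ℂ)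
    (hv : ∀ n : ℤ, Differentiable ℝ (fun t : ℝ => v (t, n)))
    (hv1 : ∀ (t : ℝ) (n : ℤ), 1 - v (t, n)^2 ≠ 0)
    (hv2 : ∀ (t : ℝ) (n : ℤ), 1 + v (t, n)^2 ≠ 0) :
    let u : ℝ × ℤ → ℂ := fun q => 2 * v q / (1 - v q ^ 2)
    let w : ℝ × ℤ → ℂ := fun q => (1 + v q ^ 2) / (1 - v q ^ 2)
    (∀ (t : ℝ) (n : ℤ), deriv (fun s : ℝ => v (s, n)) t
        = (1 + v (t, n)^2) *
            ((∏ k ∈ Finset.Icc 1 (p-1),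
                ((1 + v (t, n + (k:ℤ))^2) / (1 - v (t, n + (k:ℤ))^2)))
                * (v (t, n + (p:ℤ)) / (1 - v (t, n + (p:ℤ))^2))
              - (∏ k ∈ Finset.Icc 1 (p-1),
                  ((1 + v (t, n - (k:ℤ))^2) / (1 - v (t, n - (k:ℤ))^2)))
                  * (v (t, n - (p:ℤ)) / (1 - v (t, n - (p:ℤ))^2))))
      ↔ (∀ (t : ℝ) (n : ℤ), deriv (fun s : ℝ => u (s, n)) t
          = (1 + u (t, n)^2) *
              (u (t, n + (p:ℤ)) * ∏ k ∈ Finset.Icc 1 (p-1), w (t, n + (k:ℤ))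
                - u (t, n - (p:ℤ)) * ∏ k ∈ Finset.Icc 1 (p-1), w (t, n - (k:ℤ)))) :=
  rational_form_equivalence_general p v hv hv1 hv2
end
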